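/- arXiv:1212.2118 — 6 statements merged into one kernel-verified Lean document; each statement's English description precedes it below -/
import Mathlib

section
/- Let w_1,…,w_m be nonempty words in the free monoid on X_1,…,X_d and let ρ_1,…,ρ_m ∈ I_A be the corresponding monomials of A, which are homogeneous of degrees σ_j = τ-weight of w_j. Then the sequence ρ_1,…,ρ_m is strongly free if and only if the sequence of words w_1,…,w_m is combinatorially free. -/
/-!
Setup: `A = F_p⟨X_1,…,X_d⟩`, the free associative algebra over `F_p` on `d`
noncommuting variables, realized as the monoid algebra of the free monoid on `Fin d`.
-/

namespace MildStmt

/-- The free associative algebra `A = F_p⟨X_1,…,X_d⟩`. -/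
abbrev A (p d : ℕ) : Type := MonoidAlgebra (ZMod p) (FreeMonoid (Fin d))

/-- The generator `X_i` of `A`. -/
noncomputable def X (p d : ℕ) (i : Fin d) : A p d :=
  MonoidAlgebra.of (ZMod p) (FreeMonoid (Fin d)) (FreeMonoid.of i)

/-- The `τ`-weight of a word in the letters `X_1,…,X_d`. -/
def wt {d : ℕ} (τ : Fin d → ℕ) (w : FreeMonoid (Fin d)) : ℕ :=
  (w.toList.map τ).sum

/-- The degree-`n` homogeneous component `A_n` of `A`:
the `F_p`-span of the monomials of `τ`-weight `n`. -/
noncomputable def Asub (p d : ℕ) (τ : Fin d → ℕ) (n : ℕ) : Submodule (ZMod p) (A p d) :=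
  Submodule.span (ZMod p)
    {x | ∃ w : FreeMonoid (Fin d), wt τ w = n ∧
      x = MonoidAlgebra.of (ZMod p) (FreeMonoid (Fin d)) w}

/-- The two-sided ideal generated by a set `S ⊆ A`, as an `F_p`-submodule of `A`. -/
noncomputable def tsi (p d : ℕ) (S : Set (A p d)) : Submodule (ZMod p) (A p d) :=
  Submodule.span (ZMod p) {x | ∃ a s b, s ∈ S ∧ x = a * s * b}

/-- The augmentation ideal `I_A`: the two-sided ideal generated by `X_1,…,X_d`. -/
noncomputable def IA (p d : ℕ) : Submodule (ZMod p) (A p d) :=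
  tsi p d (Set.range (X p d))

/-- `dim_{F_p} B_n` where `B = A/R`, graded by the images `B_n` of the `A_n`,
with the convention that the dimension is `0` for negative `n`. -/
noncomputable def dimB (p d : ℕ) (R : Submodule (ZMod p) (A p d)) (τ : Fin d → ℕ)
    (n : ℤ) : ℕ :=
  if 0 ≤ n then Module.finrank (ZMod p) (Submodule.map R.mkQ (Asub p d τ n.toNat)) else 0


/-- The strong freeness condition for a sequence of homogeneous elements
`ρ_j` of degrees `σ_j`: the graded quotient `B = A/(ρ_1,…,ρ_m)` satisfies
`dim B_0 = 1` and `dim B_n − Σ_i dim B_{n−τ_i} + Σ_j dim B_{n−σ_j} = 0` for `n ≥ 1`. -/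
def StronglyFree (p d : ℕ) (τ : Fin d → ℕ) {m : ℕ} (σ : Fin m → ℕ)
    (ρ : Fin m → A p d) : Prop :=
  dimB p d (tsi p d (Set.range ρ)) τ 0 = 1 ∧
  ∀ n : ℤ, 1 ≤ n →
    (dimB p d (tsi p d (Set.range ρ)) τ n : ℤ)
      - ∑ i : Fin d, (dimB p d (tsi p d (Set.range ρ)) τ (n - (τ i : ℤ)) : ℤ)
      + ∑ j : Fin m, (dimB p d (tsi p d (Set.range ρ)) τ (n - (σ j : ℤ)) : ℤ) = 0

/-- Combinatorial freeness of a sequence of words. -/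
def CombFree {d m : ℕ} (w : Fin m → FreeMonoid (Fin d)) : Prop :=
  (∀ i j, i ≠ j → ∀ u v : FreeMonoid (Fin d), w j ≠ u * w i * v) ∧
  (∀ i j, ∀ x y x' y' : FreeMonoid (Fin d), x ≠ 1 → y ≠ 1 → x' ≠ 1 → y' ≠ 1 →
    w i = x * y → w j = x' * y' → x ≠ y')

end MildStmt

/-!
Modulo the ideal generated by the monomials `w_j`, the words containing no `w_j` as a factor (the
normal words) form a basis of `B`, so `dim B_n` is the number `c n` of normal words of weight `n`.
Appending a letter to a normal word gives either a normal word or a word `v w_j` with `v` normal,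
whence `Σ_i c (n - τ_i) ≤ c n + Σ_j c (n - σ_j)`. Equality means that the decomposition `v w_j` is
unique, which is the absence of factors among the `w_j`, and that deleting the last letter of any
`v w_j` leaves a normal word, which then is the absence of overlaps.
-/

open Function Set Submodule

namespace MonoidAlgebra

variable {K M : Type*}

theorem supported_union [Semiring K] (S T : Set M) :
    supported K K (S ∪ T) = supported K K S ⊔ supported K K T := by
  simp only [supported_eq_map, Finsupp.supported_union, Submodule.map_sup]

theorem disjoint_supported [Semiring K] {S T : Set M} (h : Disjoint S T) :
    Disjoint (supported K K S) (supported K K T) := by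
  simp only [supported_eq_map]
  exact Submodule.disjoint_map (coeffLinearEquiv K).symm.injective
    (Finsupp.disjoint_supported_supported h)

theorem finrank_supported [Ring K] [StrongRankCondition K] {S : Set M} (hS : S.Finite) :
    Module.finrank K (supported K K S) = S.ncard := by
  have : Fintype S := hS.fintype
  rw [(supportedEquivFinsupp S).finrank_eq, Module.finrank_finsupp_self,
    Set.ncard_eq_toFinset_card', Set.toFinset_card]

theorem finrank_map_mkQ_supported [Ring K] [StrongRankCondition K] {S : Set M} (T : Set M)
    (hS : S.Finite) :
    Module.finrank K ((supported K K S).map (supported K K T).mkQ) = (S \ T).ncard := by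
  have hmap : (supported K K S).map (supported K K T).mkQ
      = (supported K K (S \ T)).map (supported K K T).mkQ := by
    refine le_antisymm ?_ (map_mono (supported_mono sdiff_subset))
    calc (supported K K S).map (supported K K T).mkQ
        ≤ (supported K K (S \ T) ⊔ supported K K T).map (supported K K T).mkQ := by
          rw [← supported_union]
          exact map_mono (supported_mono (by simp))
      _ = (supported K K (S \ T)).map (supported K K T).mkQ := by
          rw [Submodule.map_sup, mkQ_map_self, sup_bot_eq]
  have hinj : Injective ((supported K K T).mkQ.domRestrict (supported K K (S \ T))) := by
    rw [LinearMap.injective_domRestrict_iff, ker_mkQ]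
    exact disjoint_supported disjoint_sdiff_left
  rw [hmap, ← LinearMap.range_domRestrict, LinearMap.finrank_range_of_inj hinj,
    finrank_supported hS.sdiff]

theorem span_mul_of_mul_eq_supported {K M ι : Type*} [CommSemiring K] [Monoid M] (w : ι → M) :
    span K {x | ∃ a s b, s ∈ range (fun j => of K M (w j)) ∧ x = a * s * b} =
      supported K K {t | ∃ j u v, t = u * w j * v} := by
  classical
  refine le_antisymm (span_le.2 ?_) ?_
  · rintro _ ⟨a, _, b, ⟨j, rfl⟩, rfl⟩ t ht
    obtain ⟨_, hs, v, -, rfl⟩ := Finset.mem_mul.1 (support_coeff_mul_subset _ b ht)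
    obtain ⟨u, -, _, rfl⟩ := Finset.mem_image.1 (support_coeff_mul_single_subset a 1 (w j) hs)
    exact ⟨j, u, v, rfl⟩
  · rw [supported_eq_span_single, span_le]
    rintro _ ⟨t, ⟨j, u, v, rfl⟩, rfl⟩
    exact subset_span ⟨of K M u, of K M (w j), of K M v, ⟨j, rfl⟩, by simp [single_mul_single]⟩

end MonoidAlgebra

theorem Function.Injective.card_eq_card_iff_of_range_subset {β γ δ : Type*} [Finite δ]
    {f : β → γ} {g : δ → γ} (hf : Injective f) (h : range f ⊆ range g) :
    Nat.card β = Nat.card δ ↔ Injective g ∧ range g ⊆ range f := by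
  have hg : (range g).ncard ≤ Nat.card δ := by
    rw [← image_univ, ← ncard_univ]; exact ncard_image_le finite_univ
  rw [← ncard_range_of_injective hf]
  constructor
  · intro heq
    have hfg : range f = range g :=
      eq_of_subset_of_ncard_le h (heq ▸ hg) (finite_range g)
    refine ⟨?_, hfg.ge⟩
    rw [← injOn_univ]
    refine injOn_of_ncard_image_eq ?_
    rw [image_univ, ncard_univ]
    exact le_antisymm hg (heq ▸ hfg ▸ le_rfl)
  · rintro ⟨hg_inj, hsub⟩
    rw [h.antisymm hsub, ncard_range_of_injective hg_inj]

namespace Anick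

open List

variable {α ι : Type*}

def Avoids (W : ι → List α) (l : List α) : Prop := ∀ j, ¬ W j <:+: l

structure CombinatoriallyFree (W : ι → List α) : Prop where
  pairwise_not_infix : Pairwise fun i j => ¬ W i <:+: W j
  no_overlap : ∀ i j (x y x' y' : List α), x ≠ [] → y ≠ [] → x' ≠ [] → y' ≠ [] →
    W i = x ++ y → W j = x' ++ y' → x ≠ y'

section Avoidance

variable {W : ι → List α}

theorem Avoids.of_infix {l l' : List α} (hl : Avoids W l) (h : l' <:+: l) : Avoids W l' :=
  fun j hj => hl j (hj.trans h)

theorem avoids_nil (hW : ∀ j, W j ≠ []) : Avoids W [] :=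
  fun j h => hW j (eq_nil_of_infix_nil h)

theorem Avoids.ne_nil {l : List α} (hl : Avoids W l) (j : ι) : W j ≠ [] :=
  fun h => hl j (h ▸ nil_infix)

theorem Avoids.exists_eq_append_of_infix_concat {u : List α} {a : α} {k : ι}
    (hu : Avoids W u) (h : W k <:+: u ++ [a]) : ∃ v, Avoids W v ∧ u ++ [a] = v ++ W k := by
  obtain ⟨v, hv⟩ := (infix_concat_iff.1 h).resolve_right (hu k)
  have hu_eq : u = v ++ (W k).dropLast := by
    rw [← dropLast_append_of_ne_nil (hu.ne_nil k), hv, dropLast_concat]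
  exact ⟨v, hu.of_infix (hu_eq ▸ (prefix_append _ _).isInfix), hv.symm⟩

theorem avoids_of_infix_of_length_lt (hpw : Pairwise fun i j => ¬ W i <:+: W j) {l : List α}
    {j : ι} (hl : l <:+: W j) (hlen : l.length < (W j).length) : Avoids W l := by
  intro k hk
  by_cases hkj : k = j
  · subst hkj
    exact absurd hk.length_le (not_le.2 hlen)
  · exact hpw hkj (hk.trans hl)

theorem CombinatoriallyFree.avoids_append_dropLast (hcf : CombinatoriallyFree W) {v : List α}
    (hv : Avoids W v) (j : ι) : Avoids W (v ++ (W j).dropLast) := by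
  intro l hl
  rcases infix_append_iff_ne_nil.1 hl with h | h | ⟨s, p, hs, hp, hsp, -, r, hr⟩
  · exact hv l h
  · have hlen : (W j).dropLast.length < (W j).length := by
      have := length_pos_iff.2 (hv.ne_nil j)
      rw [length_dropLast]; omega
    exact avoids_of_infix_of_length_lt hcf.pairwise_not_infix (dropLast_prefix _).isInfix hlen l h
  · -- `W l = s ++ p` overlaps `W j = p ++ r ++ [last]`
    refine hcf.no_overlap j l p (r ++ [(W j).getLast (hv.ne_nil j)]) s p hp (by simp) hs hp ?_
      hsp rfl
    rw [← append_assoc, hr, dropLast_append_getLast]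

end Avoidance

section Counting

variable (τ : α → ℕ) (W : ι → List α)

def normalWords (n : ℤ) : Set (List α) := {l | Avoids W l ∧ ((l.map τ).sum : ℤ) = n}

noncomputable def normalCount (n : ℤ) : ℕ := (normalWords τ W n).ncard

-- The recursion at `n` says that `Source` and `Target` have the same size, and `sourceWord`
-- embeds `Source` into the words listed by `targetWord`.
abbrev Source (n : ℤ) : Type _ := Σ a : α, normalWords τ W (n - τ a)

abbrev Target (n : ℤ) : Type _ :=
  normalWords τ W n ⊕ Σ j : ι, normalWords τ W (n - ((W j).map τ).sum)

def sourceWord (n : ℤ) (x : Source τ W n) : List α := x.2.1 ++ [x.1]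

def targetWord (n : ℤ) : Target τ W n → List α :=
  Sum.elim Subtype.val fun x => x.2.1 ++ W x.1

variable {τ W}

theorem length_le_sum_map (hτ : ∀ a, 1 ≤ τ a) (l : List α) : l.length ≤ (l.map τ).sum := by
  simpa using List.sum_le_sum (l := l) fun a _ => hτ a

theorem one_le_sum_map (hτ : ∀ a, 1 ≤ τ a) {l : List α} (hl : l ≠ []) :
    1 ≤ ((l.map τ).sum : ℤ) := by
  have := length_le_sum_map hτ l
  have := length_pos_iff.2 hl
  omega

theorem finite_setOf_sum_map_le [Finite α] (hτ : ∀ a, 1 ≤ τ a) (n : ℕ) :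
    {l : List α | (l.map τ).sum ≤ n}.Finite :=
  (List.finite_length_le α n).subset fun l hl => (length_le_sum_map hτ l).trans hl

theorem finite_normalWords [Finite α] (hτ : ∀ a, 1 ≤ τ a) (n : ℤ) :
    (normalWords τ W n).Finite :=
  (finite_setOf_sum_map_le hτ n.toNat).subset fun l ⟨_, hl⟩ => by
    show _ ≤ n.toNat
    omega

theorem normalCount_zero (hτ : ∀ a, 1 ≤ τ a) (hW : ∀ j, W j ≠ []) :
    normalCount τ W 0 = 1 := by
  rw [normalCount, ncard_eq_one]
  refine ⟨[], ?_⟩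
  ext l
  simp only [normalWords, mem_ofPred_eq, mem_singleton_iff]
  refine ⟨fun ⟨_, hl⟩ => length_eq_zero_iff.1 ?_, fun hl => hl ▸ ⟨avoids_nil hW, by simp⟩⟩
  have := length_le_sum_map hτ l
  omega

theorem sourceWord_injective {n : ℤ} : Injective (sourceWord τ W n) := by
  rintro ⟨a, u, hu⟩ ⟨b, v, hv⟩ h
  obtain ⟨rfl, hab⟩ := append_inj' h rfl
  obtain rfl : a = b := by simpa using hab
  rfl

theorem mem_range_sourceWord {n : ℤ} {t : List α} :
    t ∈ range (sourceWord τ W n) ↔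
      t ≠ [] ∧ Avoids W t.dropLast ∧ ((t.map τ).sum : ℤ) = n := by
  constructor
  · rintro ⟨⟨a, u, hu, hsum⟩, rfl⟩
    refine ⟨by simp [sourceWord], by simpa [sourceWord] using hu, ?_⟩
    simp only [sourceWord, map_append, sum_append, map_singleton, sum_singleton]
    omega
  · rintro ⟨ht, hav, hsum⟩
    refine ⟨⟨t.getLast ht, t.dropLast, hav, ?_⟩, dropLast_append_getLast ht⟩
    rw [← dropLast_append_getLast ht] at hsum
    simp only [map_append, sum_append, map_singleton, sum_singleton] at hsum
    omega

theorem range_sourceWord_subset (n : ℤ) :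
    range (sourceWord τ W n) ⊆ range (targetWord τ W n) := by
  rintro _ ⟨⟨a, u, hu, hsum⟩, rfl⟩
  by_cases h : Avoids W (u ++ [a])
  · refine ⟨Sum.inl ⟨u ++ [a], h, ?_⟩, rfl⟩
    simp only [map_append, sum_append, map_singleton, sum_singleton]
    omega
  · obtain ⟨k, hk⟩ : ∃ k, W k <:+: u ++ [a] := by simpa [Avoids] using h
    obtain ⟨v, hv, huv⟩ := hu.exists_eq_append_of_infix_concat hk
    refine ⟨Sum.inr ⟨k, v, hv, ?_⟩, huv.symm⟩
    have := congrArg (fun l => (l.map τ).sum) huv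
    simp only [map_append, sum_append, map_singleton, sum_singleton] at this
    omega

theorem CombinatoriallyFree.targetWord_injective (hcf : CombinatoriallyFree W) (n : ℤ) :
    Injective (targetWord τ W n) := by
  have hsuffix : ∀ {t v : List α} {j : ι}, Avoids W t → t ≠ v ++ W j :=
    fun ht h => ht _ (h ▸ (suffix_append _ _).isInfix)
  rintro (⟨t, ht, _⟩ | ⟨j, v, _⟩) (⟨t', ht', _⟩ | ⟨j', v', _⟩) h <;>
    simp only [targetWord, Sum.elim_inl, Sum.elim_inr] at h
  · exact congrArg Sum.inl (Subtype.ext h)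
  · exact absurd h (hsuffix ht)
  · exact absurd h.symm (hsuffix ht')
  · obtain rfl : j = j' := by
      by_contra hjj
      rcases suffix_or_suffix_of_suffix (suffix_append v (W j)) (h ▸ suffix_append v' (W j'))
        with hs | hs
      · exact hcf.pairwise_not_infix hjj hs.isInfix
      · exact hcf.pairwise_not_infix (Ne.symm hjj) hs.isInfix
    obtain rfl := append_cancel_right h
    rfl

theorem CombinatoriallyFree.range_targetWord_subset (hcf : CombinatoriallyFree W) {n : ℤ}
    (hn : 1 ≤ n) : range (targetWord τ W n) ⊆ range (sourceWord τ W n) := by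
  rintro _ ⟨⟨t, ht, hsum⟩ | ⟨j, v, hv, hsum⟩, rfl⟩ <;> rw [mem_range_sourceWord]
  · refine ⟨?_, ht.of_infix (dropLast_prefix t).isInfix, hsum⟩
    rintro rfl
    simp only [map_nil, sum_nil, Nat.cast_zero] at hsum
    omega
  · simp only [targetWord, Sum.elim_inr, map_append, sum_append, Nat.cast_add]
    refine ⟨by simp [hv.ne_nil j], ?_, by omega⟩
    rw [dropLast_append_of_ne_nil (hv.ne_nil j)]
    exact hcf.avoids_append_dropLast hv j

theorem pairwise_not_infix_of_forall_targetWord (hτ : ∀ a, 1 ≤ τ a) (hW : ∀ j, W j ≠ [])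
    (H : ∀ n, 1 ≤ n → Injective (targetWord τ W n) ∧
      range (targetWord τ W n) ⊆ range (sourceWord τ W n)) :
    Pairwise fun i j => ¬ W i <:+: W j := by
  intro i j hij hinf
  set n : ℤ := ↑((W j).map τ).sum
  have hn : 1 ≤ n := one_le_sum_map hτ (hW j)
  let e : Target τ W n :=
    Sum.inr ⟨j, [], avoids_nil hW, by simp only [map_nil, sum_nil, Nat.cast_zero, n, sub_self]⟩
  obtain ⟨hne, hav, -⟩ := mem_range_sourceWord.1 ((H n hn).2 ⟨e, rfl⟩)
  simp only [e, targetWord, Sum.elim_inr, nil_append] at hne hav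
  -- `W j` is not normal, but its longest proper prefix is: so `W j = v ++ W i` with `v` normal
  obtain ⟨v, hv, hvi⟩ := hav.exists_eq_append_of_infix_concat (a := (W j).getLast hne)
    ((dropLast_append_getLast hne).symm ▸ hinf)
  rw [dropLast_append_getLast hne] at hvi
  have hsum : ((v.map τ).sum : ℤ) = n - ((W i).map τ).sum := by
    simp only [n, hvi, map_append, sum_append, Nat.cast_add]; ring
  have := (H n hn).1 (a₁ := e) (a₂ := Sum.inr ⟨i, v, hv, hsum⟩) hvi
  simp only [e, Sum.inr.injEq, Sigma.mk.injEq] at this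
  exact hij this.1.symm

theorem no_overlap_of_forall_targetWord (hτ : ∀ a, 1 ≤ τ a)
    (hpw : Pairwise fun i j => ¬ W i <:+: W j)
    (H : ∀ n, 1 ≤ n → range (targetWord τ W n) ⊆ range (sourceWord τ W n)) :
    ∀ i j (x y x' y' : List α), x ≠ [] → y ≠ [] → x' ≠ [] → y' ≠ [] →
      W i = x ++ y → W j = x' ++ y' → x ≠ y' := by
  rintro i j x y x' y' hx hy hx' - hi hj rfl
  set n : ℤ := ↑((x' ++ W i).map τ).sum
  have hn : 1 ≤ n := one_le_sum_map hτ (by simp [hx'])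
  have hx'_normal : Avoids W x' :=
    avoids_of_infix_of_length_lt hpw (hj ▸ (prefix_append x' x).isInfix)
      (by simp [hj, length_pos_iff.2 hx])
  have hsum : ((x'.map τ).sum : ℤ) = n - ((W i).map τ).sum := by
    simp only [n, map_append, sum_append, Nat.cast_add]; ring
  obtain ⟨-, hav, -⟩ := mem_range_sourceWord.1
    (H n hn ⟨Sum.inr ⟨i, x', hx'_normal, hsum⟩, rfl⟩)
  -- the normal word `dropLast (x' ++ x ++ y)` contains `W j = x' ++ x`
  apply hav j
  simp only [targetWord, Sum.elim_inr, hi, hj, ← append_assoc, dropLast_append_of_ne_nil hy]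
  exact (prefix_append _ _).isInfix

theorem natCard_source [Fintype α] (hτ : ∀ a, 1 ≤ τ a) (n : ℤ) :
    Nat.card (Source τ W n) = ∑ a, normalCount τ W (n - τ a) := by
  have (k : ℤ) : Finite (normalWords τ W k) := (finite_normalWords hτ k).to_subtype
  simp only [Nat.card_sigma, Nat.card_coe_set_eq, normalCount]

theorem natCard_target [Finite α] [Fintype ι] (hτ : ∀ a, 1 ≤ τ a) (n : ℤ) :
    Nat.card (Target τ W n) =
      normalCount τ W n + ∑ j, normalCount τ W (n - ((W j).map τ).sum) := by
  have (k : ℤ) : Finite (normalWords τ W k) := (finite_normalWords hτ k).to_subtype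
  simp only [Nat.card_sum, Nat.card_sigma, Nat.card_coe_set_eq, normalCount]

theorem normalCount_recursion_iff [Fintype α] [Fintype ι] (hτ : ∀ a, 1 ≤ τ a)
    (hW : ∀ j, W j ≠ []) :
    (∀ n : ℤ, 1 ≤ n →
      (normalCount τ W n : ℤ) - ∑ a, (normalCount τ W (n - τ a) : ℤ)
        + ∑ j, (normalCount τ W (n - ((W j).map τ).sum) : ℤ) = 0) ↔
      CombinatoriallyFree W := by
  have hcard (n : ℤ) : (normalCount τ W n : ℤ) - ∑ a, (normalCount τ W (n - τ a) : ℤ)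
        + ∑ j, (normalCount τ W (n - ((W j).map τ).sum) : ℤ) = 0 ↔
      Injective (targetWord τ W n) ∧ range (targetWord τ W n) ⊆ range (sourceWord τ W n) := by
    have (k : ℤ) : Finite (normalWords τ W k) := (finite_normalWords hτ k).to_subtype
    rw [← sourceWord_injective.card_eq_card_iff_of_range_subset (range_sourceWord_subset n),
      natCard_source hτ, natCard_target hτ]
    push_cast
    constructor <;> intro h <;> linarith
  simp only [hcard]
  refine ⟨fun H => ?_, fun hcf n hn => ⟨hcf.targetWord_injective n, hcf.range_targetWord_subset hn⟩⟩
  have hpw := pairwise_not_infix_of_forall_targetWord hτ hW H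
  exact ⟨hpw, no_overlap_of_forall_targetWord hτ hpw fun n hn => (H n hn).2⟩

end Counting

end Anick

theorem FreeMonoid.exists_eq_mul_mul_iff_infix {α : Type*} {s t : FreeMonoid α} :
    (∃ u v, t = u * s * v) ↔ s.toList <:+: t.toList := by
  constructor
  · rintro ⟨u, v, rfl⟩
    exact ⟨u.toList, v.toList, by simp⟩
  · rintro ⟨a, b, h⟩
    exact ⟨.ofList a, .ofList b, FreeMonoid.toList.injective (by simp [h])⟩

namespace MildStmt

open Anick

theorem Asub_eq_supported (p d : ℕ) (τ : Fin d → ℕ) (n : ℕ) :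
    Asub p d τ n = MonoidAlgebra.supported (ZMod p) (ZMod p) {t | wt τ t = n} := by
  rw [Asub, MonoidAlgebra.supported_eq_span_single]
  congr 1
  ext x
  exact ⟨fun ⟨t, ht, hx⟩ => ⟨t, ht, hx.symm⟩, fun ⟨t, ht, hx⟩ => ⟨t, ht, hx.symm⟩⟩

theorem dimB_eq_normalCount (p d m : ℕ) [Fact p.Prime] (τ : Fin d → ℕ) (hτ : ∀ i, 1 ≤ τ i)
    (w : Fin m → FreeMonoid (Fin d)) (n : ℤ) :
    dimB p d (tsi p d (Set.range fun j => MonoidAlgebra.of (ZMod p) _ (w j))) τ n =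
      normalCount τ (fun j => (w j).toList) n := by
  rcases lt_or_ge n 0 with hn | hn
  · have : normalWords τ (fun j => (w j).toList) n = ∅ :=
      eq_empty_of_forall_notMem fun l hl => by have := hl.2; omega
    rw [dimB, if_neg (not_le.2 hn), normalCount, this, ncard_empty]
  have hpre : {t : FreeMonoid (Fin d) | wt τ t = n.toNat} \ {t | ∃ j u v, t = u * w j * v} =
      FreeMonoid.toList ⁻¹' normalWords τ (fun j => (w j).toList) n := by
    ext t
    simp only [normalWords, Avoids, wt, mem_sdiff, mem_preimage, mem_ofPred_eq, not_exists,
      ← FreeMonoid.exists_eq_mul_mul_iff_infix]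
    rw [and_comm, and_congr_right_iff]
    omega
  rw [dimB, if_pos hn, Asub_eq_supported, tsi, MonoidAlgebra.span_mul_of_mul_eq_supported,
    MonoidAlgebra.finrank_map_mkQ_supported, hpre, normalCount,
    ncard_preimage_of_injective_subset_range FreeMonoid.toList.injective (by simp)]
  exact ((finite_setOf_sum_map_le hτ n.toNat).preimage FreeMonoid.toList.injective.injOn).subset
    fun t ht => le_of_eq ht

theorem combFree_iff_combinatoriallyFree {d m : ℕ} (w : Fin m → FreeMonoid (Fin d)) :
    CombFree w ↔ CombinatoriallyFree fun j => (w j).toList :=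
  -- `FreeMonoid α` is definitionally `List α`, so the overlap conditions agree verbatim
  ⟨fun ⟨h1, h2⟩ => ⟨fun i j hij hinf =>
      let ⟨u, v, h⟩ := FreeMonoid.exists_eq_mul_mul_iff_infix.2 hinf; h1 i j hij u v h, h2⟩,
    fun ⟨h1, h2⟩ => ⟨fun _ _ hij u v h =>
      h1 hij (FreeMonoid.exists_eq_mul_mul_iff_infix.1 ⟨u, v, h⟩), h2⟩⟩

theorem stmt_2_general (p d m : ℕ) [Fact p.Prime]
    (τ : Fin d → ℕ) (hτ : ∀ i, 1 ≤ τ i)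
    (w : Fin m → FreeMonoid (Fin d)) (hw : ∀ j, w j ≠ 1) :
    StronglyFree p d τ (fun j => wt τ (w j))
        (fun j => MonoidAlgebra.of (ZMod p) (FreeMonoid (Fin d)) (w j)) ↔
      CombFree w := by
  have hW (j : Fin m) : (w j).toList ≠ [] := fun h => hw j (FreeMonoid.toList.injective h)
  rw [StronglyFree, combFree_iff_combinatoriallyFree, ← normalCount_recursion_iff hτ hW]
  simp only [dimB_eq_normalCount p d m τ hτ w, normalCount_zero hτ hW, true_and, wt]

/-- Anick: a sequence of monomials is strongly free iff the corresponding
sequence of words is combinatorially free. -/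
theorem stmt_2 (p d m : ℕ) [Fact p.Prime] (hd : 1 ≤ d)
    (τ : Fin d → ℕ) (hτ : ∀ i, 1 ≤ τ i)
    (w : Fin m → FreeMonoid (Fin d)) (hw : ∀ j, w j ≠ 1) :
    StronglyFree p d τ (fun j => wt τ (w j))
        (fun j => MonoidAlgebra.of (ZMod p) (FreeMonoid (Fin d)) (w j)) ↔
      CombFree w :=
  stmt_2_general p d m τ hτ w hw

end MildStmt
end

section
/- Fix positive integer weights τ_1,…,τ_d, a subset U of the letters {X_1,…,X_d}, and a linear order on the letters. For a word w = X_{i_1}⋯X_{i_ℓ} define deg^τ(w) = τ_{i_1}+…+τ_{i_ℓ}, l^U(w) = #{k : X_{i_k} ∉ U}, and k^U(w) = Σ_{k : X_{i_k} ∉ U} (τ_{i_1}+…+τ_{i_k}). Let <' be the length-then-lexicographic order on words: w <' w' iff length(w) < length(w'), or the lengths are equal and w precedes w' lexicographically with respect to the chosen order on letters. Define w <_U w' iff the triple (deg^τ(w), l^U(w), k^U(w)) is lexicographically smaller than (deg^τ(w'), l^U(w'), k^U(w')), or the two triples are equal and w <' w'. Then <_U is a multiplicative order on the set of words: it is a strict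 total order, the empty word 1 satisfies 1 <_U α for every word α ≠ 1, and α <_U α' implies β·α·γ <_U β·α'·γ for all words β, γ. -/
namespace MildStmt

/-- `l^U(w)`: the number of letters of `w` not belonging to `U`. -/
def lU {d : ℕ} (U : Finset (Fin d)) (w : FreeMonoid (Fin d)) : ℕ :=
  (w.toList.filter (fun i => decide (i ∉ U))).length

/-- `k^U(w) = Σ_{k : X_{i_k} ∉ U} deg^τ(X_{i_1}⋯X_{i_k})`, the sum over the positions `k`
whose letter is not in `U` of the `τ`-weight of the prefix of `w` of length `k`. -/
def kU {d : ℕ} (τ : Fin d → ℕ) (U : Finset (Fin d)) (w : FreeMonoid (Fin d)) : ℕ :=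
  ((w.toList.zipIdx.map Prod.swap).map (fun q =>
    if q.2 ∈ U then 0 else ((w.toList.take (q.1 + 1)).map τ).sum)).sum

/-- The length-then-lexicographic order `<'` on words, with respect to a strict order
`ltr` on the letters. -/
def lenLex {d : ℕ} (ltr : Fin d → Fin d → Prop) (w w' : FreeMonoid (Fin d)) : Prop :=
  w.toList.length < w'.toList.length ∨
    (w.toList.length = w'.toList.length ∧ List.Lex ltr w.toList w'.toList)

/-- The order `<_U` on words: compare the triples `(deg^τ, l^U, k^U)` lexicographically,
and break ties by the length-then-lexicographic order `<'`. -/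
def ltU {d : ℕ} (τ : Fin d → ℕ) (U : Finset (Fin d)) (ltr : Fin d → Fin d → Prop)
    (w w' : FreeMonoid (Fin d)) : Prop :=
  wt τ w < wt τ w' ∨
    (wt τ w = wt τ w' ∧
      (lU U w < lU U w' ∨
        (lU U w = lU U w' ∧
          (kU τ U w < kU τ U w' ∨
            (kU τ U w = kU τ U w' ∧ lenLex ltr w w')))))

/-!
The relation `<_U` is the preimage of a lexicographic product of strict total orders
under the injective map `w ↦ (deg^τ w, l^U w, k^U w, length w, w)`, hence a strict total
order. For compatibility with multiplication, `deg^τ` and `l^U` are additive and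
`k^U (u v) = k^U u + k^U v + deg^τ u · l^U v`; so whenever the leading components of `α`
and `α'` agree, the next component of `β α γ` and of `β α' γ` is shifted by the same
amount. The empty word is smallest because every nonempty word has positive weight.
-/

theorem _root_.List.isStrictTotalOrder_lex {α : Type*} (r : α → α → Prop)
    [IsStrictTotalOrder α r] : IsStrictTotalOrder (List α) (List.Lex r) :=
  { isStrictWeakOrder_of_isOrderConnected with }

theorem _root_.List.Lex.append_right_of_length_eq {α : Type*} {r : α → α → Prop}
    {l₁ l₂ : List α} (t : List α) (hlen : l₁.length = l₂.length) (h : List.Lex r l₁ l₂) :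
    List.Lex r (l₁ ++ t) (l₂ ++ t) := by
  induction h with
  | nil => simp at hlen
  | cons _ ih => exact .cons (ih (by simpa using hlen))
  | rel h => exact .rel h

variable {d : ℕ} (τ : Fin d → ℕ) (U : Finset (Fin d))

@[simp] theorem wt_of (a : Fin d) : wt τ (.of a) = τ a := by simp [wt]

@[simp] theorem wt_mul (u v : FreeMonoid (Fin d)) : wt τ (u * v) = wt τ u + wt τ v := by
  simp [wt]

@[simp] theorem lU_of (a : Fin d) : lU U (.of a) = if a ∈ U then 0 else 1 := by
  by_cases ha : a ∈ U <;> simp [lU, ha]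

@[simp] theorem lU_mul (u v : FreeMonoid (Fin d)) : lU U (u * v) = lU U u + lU U v := by
  simp [lU]

theorem sum_map_ite_notMem_eq_mul_lU (c : ℕ) (w : FreeMonoid (Fin d)) :
    (w.toList.map fun x => if x ∈ U then 0 else c).sum = c * lU U w := by
  induction w using FreeMonoid.inductionOn' with
  | one => rfl
  | of_mul a w ih => by_cases ha : a ∈ U <;> simp [ha, ih, mul_add, add_comm]

-- The letter `a` contributes `τ a` once for each position, at or after it, outside `U`.
theorem kU_of_mul (a : Fin d) (w : FreeMonoid (Fin d)) :
    kU τ U (.of a * w) = τ a * lU U (.of a * w) + kU τ U w := by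
  have ite_add_distrib (p : Prop) [Decidable p] (m n : ℕ) :
      (if p then 0 else m + n) = (if p then 0 else m) + (if p then 0 else n) := by
    split_ifs <;> rfl
  have sum_zipIdx : (w.toList.zipIdx.map fun x => if x.1 ∈ U then 0 else τ a).sum =
      τ a * lU U w := by
    rw [← sum_map_ite_notMem_eq_mul_lU]
    conv_rhs => rw [← List.zipIdx_map_fst 0 w.toList, List.map_map]
    rfl
  simp only [kU, FreeMonoid.toList_of_mul, List.zipIdx_cons, List.zipIdx_succ, List.map_cons,
    List.map_map, List.sum_cons]
  simp only [Prod.swap_prod_mk, Prod.fst_swap, Prod.snd_swap, Function.comp_def,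
    List.take_succ_cons, List.take_zero, List.map_take, List.map_cons, List.map_nil, List.sum_cons,
    List.sum_nil, zero_add, add_zero, ite_add_distrib, List.sum_map_add, sum_zipIdx, lU_mul, lU_of]
  split_ifs <;> ring

theorem kU_mul (u v : FreeMonoid (Fin d)) :
    kU τ U (u * v) = kU τ U u + kU τ U v + wt τ u * lU U v := by
  induction u using FreeMonoid.inductionOn' with
  | one => simp [kU, wt]
  | of_mul a u ih => simp only [mul_assoc, kU_of_mul, ih, wt_mul, lU_mul, wt_of]; ring

variable (ltr : Fin d → Fin d → Prop)

def ltUKey (w : FreeMonoid (Fin d)) : ℕ × ℕ × ℕ × ℕ × List (Fin d) :=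
  (wt τ w, lU U w, kU τ U w, w.toList.length, w.toList)

theorem ltU_eq_invImage : ltU τ U ltr =
    InvImage
      (Prod.Lex (· < ·) (Prod.Lex (· < ·) (Prod.Lex (· < ·) (Prod.Lex (· < ·) (List.Lex ltr)))))
      (ltUKey τ U) := by
  ext w w'
  simp [ltU, lenLex, ltUKey, InvImage, Prod.lex_def]

theorem isStrictTotalOrder_ltU [IsStrictTotalOrder (Fin d) ltr] :
    IsStrictTotalOrder (FreeMonoid (Fin d)) (ltU τ U ltr) := by
  have := List.isStrictTotalOrder_lex ltr
  have hinj : Function.Injective (ltUKey τ U) := fun w w' h =>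
    FreeMonoid.toList.injective (congrArg (·.2.2.2.2) h)
  rw [ltU_eq_invImage]
  exact { toTrichotomous := InvImage.trichotomous hinj }

variable {τ U ltr} {α α' : FreeMonoid (Fin d)}

theorem lenLex_mul_left (β : FreeMonoid (Fin d)) (h : lenLex ltr α α') :
    lenLex ltr (β * α) (β * α') := by
  simp only [lenLex, FreeMonoid.toList_mul, List.length_append] at h ⊢
  rcases h with hlen | ⟨hlen, hlex⟩
  · exact .inl (by omega)
  · exact .inr ⟨by omega, List.Lex.append_left ltr hlex β.toList⟩

theorem lenLex_mul_right (γ : FreeMonoid (Fin d)) (h : lenLex ltr α α') :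
    lenLex ltr (α * γ) (α' * γ) := by
  simp only [lenLex, FreeMonoid.toList_mul, List.length_append] at h ⊢
  rcases h with hlen | ⟨hlen, hlex⟩
  · exact .inl (by omega)
  · exact .inr ⟨by omega, hlex.append_right_of_length_eq γ.toList hlen⟩

theorem ltU_mul_left (β : FreeMonoid (Fin d)) (h : ltU τ U ltr α α') :
    ltU τ U ltr (β * α) (β * α') := by
  simp only [ltU, wt_mul, lU_mul, kU_mul] at h ⊢
  rcases h with hwt | ⟨hwt, hlU | ⟨hlU, hkU | ⟨hkU, hlex⟩⟩⟩
  · exact .inl (by omega)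
  · exact .inr ⟨by omega, .inl (by omega)⟩
  · exact .inr ⟨by omega, .inr ⟨by omega, .inl (by rw [hlU]; omega)⟩⟩
  · exact .inr ⟨by omega, .inr ⟨by omega,
      .inr ⟨by rw [hlU, hkU], lenLex_mul_left β hlex⟩⟩⟩

theorem ltU_mul_right (γ : FreeMonoid (Fin d)) (h : ltU τ U ltr α α') :
    ltU τ U ltr (α * γ) (α' * γ) := by
  simp only [ltU, wt_mul, lU_mul, kU_mul] at h ⊢
  rcases h with hwt | ⟨hwt, hlU | ⟨hlU, hkU | ⟨hkU, hlex⟩⟩⟩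
  · exact .inl (by omega)
  · exact .inr ⟨by omega, .inl (by omega)⟩
  · exact .inr ⟨by omega, .inr ⟨by omega, .inl (by rw [hwt]; omega)⟩⟩
  · exact .inr ⟨by omega, .inr ⟨by omega,
      .inr ⟨by rw [hwt, hkU], lenLex_mul_right γ hlex⟩⟩⟩

theorem wt_pos (hτ : ∀ i, 0 < τ i) {w : FreeMonoid (Fin d)} (hw : w ≠ 1) : 0 < wt τ w := by
  cases w using FreeMonoid.casesOn with
  | one => exact absurd rfl hw
  | of_mul a w => simpa using Nat.add_pos_left (hτ a) _

/-- for positive weights `τ`, any subset `U` of the letters, and any strict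
total (linear) order on the letters, the relation `<_U` is a multiplicative order on the
set of words: a strict total order in which the empty word is smallest and which is
compatible with two-sided multiplication. -/
theorem stmt_3 (d : ℕ) (τ : Fin d → ℕ) (hτ : ∀ i, 1 ≤ τ i)
    (U : Finset (Fin d)) (ltr : Fin d → Fin d → Prop)
    (hirr : ∀ a : Fin d, ¬ ltr a a)
    (htrans : ∀ a b c : Fin d, ltr a b → ltr b c → ltr a c)
    (htri : ∀ a b : Fin d, ltr a b ∨ a = b ∨ ltr b a) :
    (∀ w : FreeMonoid (Fin d), ¬ ltU τ U ltr w w) ∧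
    (∀ w w' w'' : FreeMonoid (Fin d),
      ltU τ U ltr w w' → ltU τ U ltr w' w'' → ltU τ U ltr w w'') ∧
    (∀ w w' : FreeMonoid (Fin d), ltU τ U ltr w w' ∨ w = w' ∨ ltU τ U ltr w' w) ∧
    (∀ w : FreeMonoid (Fin d), w ≠ 1 → ltU τ U ltr 1 w) ∧
    (∀ α α' β γ : FreeMonoid (Fin d),
      ltU τ U ltr α α' → ltU τ U ltr (β * α * γ) (β * α' * γ)) := by
  have : IsStrictTotalOrder (Fin d) ltr :=
    { irrefl := hirr
      trans := htrans
      trichotomous := fun a b hab hba => ((htri a b).resolve_left hab).resolve_right hba }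
  have := isStrictTotalOrder_ltU τ U ltr
  exact ⟨irrefl, fun _ _ _ => _root_.trans, trichotomous_of _, fun _ hw => .inl (wt_pos hτ hw),
    fun _ _ β γ h => ltU_mul_right γ (ltU_mul_left β h)⟩

end MildStmt
end

section
/- Let V and W be vector spaces over F_p, n ≥ 2, and let μ : V^n → W be a multilinear map satisfying the shuffle identities. Then the diagonal map B_n : V → W defined by B_n(χ) = μ(χ, χ, …, χ) is additive, hence F_p-linear; moreover, if n is not a power of p, then B_n is identically zero. -/
/-!
An `(a, n - a)`-shuffle is determined by the image `S` of its first block, and every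
`a`-subset `S` arises, so for a word that is `χ` on the first block and `ψ` on the second the
shuffle identity says `∑_{#S = a} μ(χ on S, ψ off S) = 0`. Expanding `μ(χ + ψ, …, χ + ψ)` by
multilinearity and grouping by `#S` leaves only the terms `S = ∅` and `S = univ`, which is
additivity; `ZMod p`-linearity follows. Taking `ψ = χ` gives `C(n, a) • μ(χ, …, χ) = 0` for
`0 < a < n`, and if all these binomial coefficients vanish mod `p` then `n` is a power of `p`
(Lucas).
-/

namespace MildStmt

/-- An `(a, n−a)`-shuffle (positions `0,…,n−1`, first block `0,…,a−1`): a permutation `f`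
of `{0,…,n−1}` such that `f i < f j` whenever `i < j` and both `i, j` lie in the first
block or both lie in the second block. -/
def IsShuffle (n a : ℕ) (f : Equiv.Perm (Fin n)) : Prop :=
  ∀ i j : Fin n, i < j → ((j : ℕ) < a ∨ a ≤ (i : ℕ)) → f i < f j

instance (n a : ℕ) (f : Equiv.Perm (Fin n)) : Decidable (IsShuffle n a f) := by
  unfold IsShuffle; infer_instance

/-- A multilinear map `μ : V^n → W` satisfies the shuffle identities if for all
`a, b ≥ 1` with `a + b = n` and all `ξ_1,…,ξ_n ∈ V`, the sum of
`μ(ξ_{f⁻¹(1)},…,ξ_{f⁻¹(n)})` over all `(a,b)`-shuffles `f` vanishes. -/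
def ShuffleIdentities (p n : ℕ) {V W : Type} [AddCommGroup V] [AddCommGroup W]
    [Module (ZMod p) V] [Module (ZMod p) W]
    (μ : MultilinearMap (ZMod p) (fun _ : Fin n => V) W) : Prop :=
  ∀ a b : ℕ, 1 ≤ a → 1 ≤ b → a + b = n → ∀ ξ : Fin n → V,
    (∑ f : Equiv.Perm (Fin n),
      if IsShuffle n a f then μ (fun i => ξ (f⁻¹ i)) else 0) = 0

open Finset

section Shuffles

variable {n a b : ℕ}

def firstBlockImage (a : ℕ) (f : Equiv.Perm (Fin n)) : Finset (Fin n) :=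
  {x | (f⁻¹ x : ℕ) < a}

lemma mem_firstBlockImage {f : Equiv.Perm (Fin n)} {i : Fin n} :
    f i ∈ firstBlockImage a f ↔ (i : ℕ) < a := by
  simp [firstBlockImage, Equiv.Perm.inv_def]

lemma card_firstBlockImage (han : a ≤ n) (f : Equiv.Perm (Fin n)) :
    #(firstBlockImage a f) = a := by
  have : firstBlockImage a f = ({i : Fin n | (i : ℕ) < a} : Finset _).map f.toEmbedding := by
    ext x
    obtain ⟨i, rfl⟩ := f.surjective x
    simp [mem_firstBlockImage]
  rw [this, card_map, Fin.card_filter_val_lt, min_eq_right han]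

lemma card_compl_of_card_eq (hab : a + b = n) {S : Finset (Fin n)} (hS : #S = a) :
    #Sᶜ = b := by
  rw [card_compl, hS, Fintype.card_fin]; omega

/-- The shuffle sending the first block onto `S` and the second onto `Sᶜ`, both in order. -/
noncomputable def shuffleOf (hab : a + b = n) (S : Finset (Fin n)) (hS : #S = a) :
    Equiv.Perm (Fin n) :=
  (finCongr hab.symm).trans <| finSumFinEquiv.symm.trans <|
    (Equiv.sumCongr (S.orderIsoOfFin hS).toEquiv
      ((Sᶜ.orderIsoOfFin (card_compl_of_card_eq hab hS)).toEquiv.trans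
        (Equiv.subtypeEquivRight fun _ => mem_compl))).trans
    (Equiv.sumCompl (· ∈ S))

section ShuffleOf

variable (hab : a + b = n) {S : Finset (Fin n)} (hS : #S = a)

lemma shuffleOf_apply_of_lt {i : Fin n} (hi : (i : ℕ) < a) :
    shuffleOf hab S hS i = S.orderEmbOfFin hS ⟨i, hi⟩ := by
  have : finCongr hab.symm i = Fin.castAdd b ⟨i, hi⟩ := rfl
  simp only [shuffleOf, Equiv.trans_apply, this, finSumFinEquiv_symm_apply_castAdd]
  simp [coe_orderIsoOfFin_apply]

lemma shuffleOf_apply_of_le {i : Fin n} (hi : a ≤ (i : ℕ)) :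
    shuffleOf hab S hS i =
      Sᶜ.orderEmbOfFin (card_compl_of_card_eq hab hS) ⟨i - a, by omega⟩ := by
  have : finCongr hab.symm i = Fin.natAdd a ⟨i - a, by omega⟩ := by ext; simp; omega
  simp only [shuffleOf, Equiv.trans_apply, this, finSumFinEquiv_symm_apply_natAdd]
  simp [coe_orderIsoOfFin_apply]

lemma isShuffle_shuffleOf : IsShuffle n a (shuffleOf hab S hS) := by
  rintro i j hij (hj | hi)
  · rw [shuffleOf_apply_of_lt hab hS (lt_trans (Fin.lt_def.mp hij) hj),
      shuffleOf_apply_of_lt hab hS hj]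
    exact (S.orderEmbOfFin hS).strictMono hij
  · rw [shuffleOf_apply_of_le hab hS hi,
      shuffleOf_apply_of_le hab hS (hi.trans (Fin.le_def.mp hij.le))]
    exact (Sᶜ.orderEmbOfFin _).strictMono (by simp [Fin.lt_def]; omega)

lemma firstBlockImage_shuffleOf : firstBlockImage a (shuffleOf hab S hS) = S := by
  ext x
  obtain ⟨i, rfl⟩ := (shuffleOf hab S hS).surjective x
  rw [mem_firstBlockImage]
  rcases lt_or_ge (i : ℕ) a with hi | hi
  · simp [hi, shuffleOf_apply_of_lt hab hS hi, orderEmbOfFin_mem]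
  · have hcompl := orderEmbOfFin_mem Sᶜ (card_compl_of_card_eq hab hS) ⟨i - a, by omega⟩
    rw [mem_compl] at hcompl
    simp [shuffleOf_apply_of_le hab hS hi, hcompl, hi]

lemma IsShuffle.eq_shuffleOf {f : Equiv.Perm (Fin n)} (hf : IsShuffle n a f)
    (hfS : firstBlockImage a f = S) : f = shuffleOf hab S hS := by
  have hfirst : (fun k : Fin a => f (Fin.castLE (by omega) k)) = S.orderEmbOfFin hS := by
    refine orderEmbOfFin_unique hS (fun k => ?_) fun k l hkl => hf _ _ hkl (Or.inl l.2)
    simp [← hfS, mem_firstBlockImage]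
  have hsecond : (fun k : Fin b => f ⟨a + k, by omega⟩) =
      Sᶜ.orderEmbOfFin (card_compl_of_card_eq hab hS) := by
    refine orderEmbOfFin_unique _ (fun k => ?_) fun k l hkl =>
      hf _ _ (Fin.mk_lt_mk.mpr (by simpa using hkl)) (Or.inr (Nat.le_add_right a k))
    simp [← hfS, mem_firstBlockImage]
  ext i
  rcases lt_or_ge (i : ℕ) a with hi | hi
  · rw [shuffleOf_apply_of_lt hab hS hi, ← hfirst]
    rfl
  · rw [shuffleOf_apply_of_le hab hS hi, ← hsecond]
    simp only [Nat.add_sub_cancel' hi]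

end ShuffleOf

lemma sum_isShuffle_eq_sum_powersetCard {M : Type*} [AddCommMonoid M] (hab : a + b = n)
    (g : Finset (Fin n) → M) :
    (∑ f : Equiv.Perm (Fin n), if IsShuffle n a f then g (firstBlockImage a f) else 0) =
      ∑ S ∈ powersetCard a univ, g S := by
  rw [sum_ite, sum_const_zero, add_zero]
  refine sum_bij' (fun f _ => firstBlockImage a f)
    (fun S hS => shuffleOf hab S (mem_powersetCard_univ.mp hS)) ?_ ?_ ?_ ?_ fun _ _ => rfl
  · intro f _
    exact mem_powersetCard_univ.mpr (card_firstBlockImage (by omega) f)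
  · intro S hS
    simpa using isShuffle_shuffleOf hab (mem_powersetCard_univ.mp hS)
  · intro f hf
    exact ((mem_filter.mp hf).2.eq_shuffleOf hab _ rfl).symm
  · intro S hS
    exact firstBlockImage_shuffleOf hab _

end Shuffles

namespace ShuffleIdentities

variable {p n : ℕ} {V W : Type} [AddCommGroup V] [AddCommGroup W]
  [Module (ZMod p) V] [Module (ZMod p) W]
  {μ : MultilinearMap (ZMod p) (fun _ : Fin n => V) W}

lemma sum_powersetCard_piecewise_eq_zero (hμ : ShuffleIdentities p n μ) {a : ℕ} (ha : 0 < a)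
    (han : a < n) (χ ψ : V) :
    ∑ S ∈ powersetCard a univ, μ (S.piecewise (fun _ => χ) fun _ => ψ) = 0 := by
  rw [← sum_isShuffle_eq_sum_powersetCard (Nat.add_sub_cancel' han.le)]
  refine Eq.trans (sum_congr rfl fun f _ => ?_)
    (hμ a (n - a) ha (by omega) (by omega) fun j => if (j : ℕ) < a then χ else ψ)
  congr 2
  ext i
  simp [firstBlockImage, piecewise]

lemma map_diag_add (hμ : ShuffleIdentities p n μ) (hn : n ≠ 0) (χ ψ : V) :
    μ (fun _ => χ + ψ) = μ (fun _ => χ) + μ (fun _ => ψ) := by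
  obtain ⟨m, rfl⟩ := Nat.exists_eq_add_one.mpr (Nat.pos_of_ne_zero hn)
  have hmiddle : ∀ i ∈ range m,
      ∑ S ∈ powersetCard (i + 1) univ, μ (S.piecewise (fun _ => χ) fun _ => ψ) = 0 :=
    fun i hi => hμ.sum_powersetCard_piecewise_eq_zero i.succ_pos (by simpa using hi) χ ψ
  rw [show (fun _ => χ + ψ) = (fun _ => χ) + fun _ => ψ from rfl, μ.map_add_univ,
    ← powerset_univ, sum_powerset, card_univ, Fintype.card_fin, sum_range_succ,
    sum_range_succ', sum_eq_zero hmiddle, powersetCard_zero]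
  have huniv : powersetCard (m + 1) (univ : Finset (Fin (m + 1))) = {univ} := by
    simpa using powersetCard_self (univ : Finset (Fin (m + 1)))
  simp [huniv, add_comm]

lemma map_diag_smul (hμ : ShuffleIdentities p n μ) (hn : n ≠ 0) (c : ZMod p) (χ : V) :
    μ (fun _ => c • χ) = c • μ (fun _ => χ) :=
  ZMod.map_smul (AddMonoidHom.mk' (fun χ => μ fun _ => χ) (hμ.map_diag_add hn)) c χ

lemma choose_smul_map_diag_eq_zero (hμ : ShuffleIdentities p n μ) {a : ℕ} (ha : 0 < a)
    (han : a < n) (χ : V) : n.choose a • μ (fun _ => χ) = 0 := by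
  simpa [piecewise_same] using hμ.sum_powersetCard_piecewise_eq_zero ha han χ χ

lemma map_diag_eq_zero [Fact p.Prime] (hμ : ShuffleIdentities p n μ) (hn : n ≠ 0)
    (hpow : ¬∃ j : ℕ, n = p ^ j) (χ : V) : μ (fun _ => χ) = 0 := by
  by_contra hχ
  refine hpow ⟨_, Choose.eq_pow_multiplicity_of_choose_modEq_zero_nat (Nat.pos_of_ne_zero hn)
    fun a ha => ?_⟩
  obtain ⟨ha, han⟩ := mem_Icc.mp ha
  have hsmul := hμ.choose_smul_map_diag_eq_zero (a := a) (by omega) (by omega) χ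
  rw [← Nat.cast_smul_eq_nsmul (ZMod p), smul_eq_zero, ZMod.natCast_eq_zero_iff] at hsmul
  exact Nat.modEq_zero_iff_dvd.mpr (hsmul.resolve_right hχ)

end ShuffleIdentities

/-- if the multilinear map `μ : V^n → W` satisfies the shuffle identities,
then the diagonal map `B_n(χ) = μ(χ,…,χ)` is additive, hence `F_p`-linear; and if `n` is
not a power of `p` then `B_n` is identically zero. -/
theorem stmt_7 (p n : ℕ) [Fact p.Prime] (hn : 2 ≤ n)
    (V W : Type) [AddCommGroup V] [AddCommGroup W]
    [Module (ZMod p) V] [Module (ZMod p) W]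
    (μ : MultilinearMap (ZMod p) (fun _ : Fin n => V) W)
    (hμ : ShuffleIdentities p n μ) :
    (∀ χ ψ : V, μ (fun _ => χ + ψ) = μ (fun _ => χ) + μ (fun _ => ψ)) ∧
    (∀ (c : ZMod p) (χ : V), μ (fun _ => c • χ) = c • μ (fun _ => χ)) ∧
    ((¬ ∃ j : ℕ, n = p ^ j) → ∀ χ : V, μ (fun _ => χ) = 0) := by
  have hn0 : n ≠ 0 := by omega
  exact ⟨hμ.map_diag_add hn0, hμ.map_diag_smul hn0, hμ.map_diag_eq_zero hn0⟩

end MildStmt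
end

section
/- Let V and W be vector spaces over F_p, n ≥ 2, and let μ : V^n → W be a multilinear map satisfying the shuffle identities. Suppose that for some χ, ψ ∈ V and some integer e with 1 ≤ e ≤ n one has μ(χ, …, χ, ψ, χ, …, χ) ≠ 0, where ψ occurs in position e (i.e., the argument is e−1 copies of χ, then ψ, then n−e copies of χ). Then μ(ψ, χ, …, χ) ≠ 0 (ψ in the first position followed by n−1 copies of χ). -/
/-!
Write `v m` for the value of `μ` at the tuple that is `ψ` in position `m` and `χ` elsewhere.
Feeding the tuple with `ψ` in position `0` into the `(a, n - a)`-shuffle identity gives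
`∑ v (f 0) = 0` over the shuffles `f`. Every such shuffle has `f 0 ≤ n - a`, and the only one
with `f 0 = n - a` is the block swap `i ↦ i + (n - a) mod n`. Taking `a = n - k`, strong
induction on `k` shows that `v 0 = 0` forces `v k = 0` for every `k`.
-/

namespace MildStmt

namespace IsShuffle

variable {n a : ℕ} {f : Equiv.Perm (Fin n)}

theorem apply_add_sub_le (hf : IsShuffle n a f) {i j : Fin n} (hij : i ≤ j)
    (hblock : (j : ℕ) < a ∨ a ≤ (i : ℕ)) : (f i : ℕ) + (j - i) ≤ f j := by
  obtain ⟨d, hd⟩ : ∃ d, (j : ℕ) = i + d := ⟨j - i, by rw [Fin.le_def] at hij; omega⟩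
  induction d generalizing j with
  | zero => simp [show j = i from Fin.ext hd]
  | succ d ih =>
    obtain ⟨k, hk⟩ : ∃ k : Fin n, (k : ℕ) = i + d := ⟨⟨i + d, by omega⟩, rfl⟩
    have step := hf k j (by rw [Fin.lt_def]; omega) (by omega)
    have := ih (j := k) (by rw [Fin.le_def]; omega) (by omega) hk
    rw [Fin.lt_def] at step
    omega

variable [NeZero n]

theorem apply_zero_le (hf : IsShuffle n a f) (ha : 1 ≤ a) (han : a ≤ n) :
    (f 0 : ℕ) ≤ n - a := by
  have hgap := hf.apply_add_sub_le (j := ⟨a - 1, by omega⟩) (Fin.zero_le _)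
    (Or.inl (by dsimp only; omega))
  have := (f ⟨a - 1, by omega⟩).isLt
  simp only [Fin.val_zero] at hgap
  omega

end IsShuffle

def blockSwap (n a : ℕ) [NeZero n] : Equiv.Perm (Fin n) :=
  Equiv.addRight (Fin.ofNat n (n - a))

section blockSwap

variable {n a : ℕ} [NeZero n]

theorem blockSwap_apply_val (han : a ≤ n) (i : Fin n) :
    (blockSwap n a i : ℕ) = if (i : ℕ) < a then i + (n - a) else i - a := by
  have hmod : (blockSwap n a i : ℕ) = ((i : ℕ) + (n - a)) % n := by
    simp [blockSwap, Fin.val_add]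
  rw [hmod]
  split_ifs with hi
  · exact Nat.mod_eq_of_lt (by omega)
  · rw [show (i : ℕ) + (n - a) = (i - a) + n by omega, Nat.add_mod_right]
    exact Nat.mod_eq_of_lt (by omega)

theorem isShuffle_blockSwap (han : a ≤ n) : IsShuffle n a (blockSwap n a) := by
  intro i j hij hblock
  rw [Fin.lt_def] at hij ⊢
  rw [blockSwap_apply_val han, blockSwap_apply_val han]
  split_ifs <;> omega

theorem IsShuffle.eq_blockSwap {f : Equiv.Perm (Fin n)} (hf : IsShuffle n a f) (han : a ≤ n)
    (h0 : (f 0 : ℕ) = n - a) : f = blockSwap n a := by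
  have hfirst : ∀ i : Fin n, (i : ℕ) < a → (f i : ℕ) = i + (n - a) := by
    intro i hi
    have hlow := hf.apply_add_sub_le (Fin.zero_le i) (Or.inl hi)
    have hhigh := hf.apply_add_sub_le (i := i) (j := ⟨a - 1, by omega⟩)
      (Fin.le_def.2 (by dsimp only; omega)) (Or.inl (by dsimp only; omega))
    have := (f ⟨a - 1, by omega⟩).isLt
    simp only [Fin.val_zero] at hlow hhigh
    omega
  -- the first block already fills the values `n - a, …, n - 1`
  have hsecond : ∀ i : Fin n, a ≤ (i : ℕ) → (f i : ℕ) < n - a := by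
    intro i hi
    by_contra! hge
    have hpre := hfirst ⟨f i - (n - a), by omega⟩ (by dsimp only; omega)
    have := f.injective (Fin.ext (hpre.trans (by dsimp only; omega)) : f ⟨_, _⟩ = f i)
    rw [Fin.ext_iff] at this
    dsimp only at this
    omega
  ext i
  rw [blockSwap_apply_val han]
  split_ifs with hi
  · exact hfirst i hi
  · have hlow := hf.apply_add_sub_le (i := ⟨a, by omega⟩) (j := i)
      (Fin.le_def.2 (by dsimp only; omega)) (Or.inr le_rfl)
    have hhigh := hf.apply_add_sub_le (i := i) (j := ⟨n - 1, by omega⟩)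
      (Fin.le_def.2 (by dsimp only; omega)) (Or.inr (by omega))
    have := hsecond ⟨n - 1, by omega⟩ (by dsimp only; omega)
    dsimp only at hlow hhigh this
    omega

end blockSwap

theorem eq_zero_of_sum_isShuffle_eq_zero {n : ℕ} [NeZero n] {W : Type*} [AddCommMonoid W]
    (v : Fin n → W)
    (hsum : ∀ a, 1 ≤ a → a < n → ∑ f with IsShuffle n a f, v (f 0) = 0)
    (h0 : v 0 = 0) (m : Fin n) : v m = 0 := by
  induction m using WellFoundedLT.induction with
  | _ m ih =>
    rcases Nat.eq_zero_or_pos m with hm | hm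
    · rwa [show m = 0 from Fin.ext hm]
    set a := n - m
    have hswap : blockSwap n a 0 = m := by
      ext
      rw [blockSwap_apply_val (by omega), if_pos (by simp only [Fin.val_zero]; omega)]
      simp only [Fin.val_zero]
      omega
    rw [← hsum a (by omega) (by omega), Finset.sum_eq_single_of_mem (blockSwap n a)
      (Finset.mem_filter.2 ⟨Finset.mem_univ _, isShuffle_blockSwap (by omega)⟩), hswap]
    intro f hf hne
    replace hf : IsShuffle n a f := (Finset.mem_filter.1 hf).2
    have hle := hf.apply_zero_le (by omega) (by omega)
    have hlt : f 0 < m := by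
      rw [Fin.lt_def]
      refine lt_of_le_of_ne (by omega) fun heq => hne (hf.eq_blockSwap (by omega) ?_)
      omega
    exact ih _ hlt

theorem ShuffleIdentities.sum_update_eq_zero {p n : ℕ} [NeZero n] {V W : Type}
    [AddCommGroup V] [AddCommGroup W] [Module (ZMod p) V] [Module (ZMod p) W]
    {μ : MultilinearMap (ZMod p) (fun _ : Fin n => V) W} (hμ : ShuffleIdentities p n μ)
    (χ ψ : V) {a : ℕ} (ha : 1 ≤ a) (han : a < n) :
    ∑ f with IsShuffle n a f, μ (Function.update (fun _ => χ) (f 0) ψ) = 0 := by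
  have := hμ a (n - a) ha (by omega) (by omega) (Function.update (fun _ => χ) 0 ψ)
  rw [← Finset.sum_filter] at this
  convert this using 3 with f
  ext i
  simp only [Function.update_apply, Equiv.Perm.inv_eq_iff_eq]

theorem stmt_8_general (p n : ℕ)
    (V W : Type) [AddCommGroup V] [AddCommGroup W]
    [Module (ZMod p) V] [Module (ZMod p) W]
    (μ : MultilinearMap (ZMod p) (fun _ : Fin n => V) W)
    (hμ : ShuffleIdentities p n μ)
    (χ ψ : V) (e : ℕ) (he1 : 1 ≤ e) (hen : e ≤ n)
    (h : μ (fun i => if (i : ℕ) = e - 1 then ψ else χ) ≠ 0) :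
    μ (fun i => if (i : ℕ) = 0 then ψ else χ) ≠ 0 := by
  have : NeZero n := ⟨by omega⟩
  have hupdate : ∀ m : Fin n,
      Function.update (fun _ => χ) m ψ = fun i : Fin n => if (i : ℕ) = m then ψ else χ := by
    intro m
    ext i
    simp [Function.update_apply, Fin.ext_iff]
  intro h0
  have := eq_zero_of_sum_isShuffle_eq_zero (fun m => μ (Function.update (fun _ => χ) m ψ))
    (fun a ha han => hμ.sum_update_eq_zero χ ψ ha han) (by rwa [hupdate, Fin.val_zero])
    ⟨e - 1, by omega⟩
  exact h (by rwa [hupdate] at this)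

/-- if the multilinear map `μ : V^n → W` satisfies the shuffle identities
and `μ(χ,…,χ,ψ,χ,…,χ) ≠ 0` with `ψ` in position `e` (so `e−1` copies of `χ` before `ψ`
and `n−e` after), then `μ(ψ,χ,…,χ) ≠ 0`. -/
theorem stmt_8 (p n : ℕ) [Fact p.Prime] (hn : 2 ≤ n)
    (V W : Type) [AddCommGroup V] [AddCommGroup W]
    [Module (ZMod p) V] [Module (ZMod p) W]
    (μ : MultilinearMap (ZMod p) (fun _ : Fin n => V) W)
    (hμ : ShuffleIdentities p n μ)
    (χ ψ : V) (e : ℕ) (he1 : 1 ≤ e) (hen : e ≤ n)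
    (h : μ (fun i => if (i : ℕ) = e - 1 then ψ else χ) ≠ 0) :
    μ (fun i => if (i : ℕ) = 0 then ψ else χ) ≠ 0 :=
  stmt_8_general p n V W μ hμ χ ψ e he1 hen h

end MildStmt
end

section
/- Let ρ_1,…,ρ_m ∈ I_A be homogeneous elements of positive degree, let R = (ρ_1,…,ρ_m) be the two-sided ideal of A they generate, and let R·I_A denote the F_p-span of all products r·y with r ∈ R and y ∈ I_A. Then the F_p-linear map (A/R)^d → I_A/(R·I_A) sending (a_1 mod R, …, a_d mod R) to (Σ_{i=1}^d a_i X_i) mod R·I_A is well defined and bijective; i.e., the left (A/R)-module I_A/(R·I_A) is free on the images of X_1,…,X_d. -/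
/-!
Setup: `A = F_p⟨X_1,…,X_d⟩`, the free associative algebra over `F_p` on `d`
noncommuting variables, realized as the monoid algebra of the free monoid on `Fin d`.
-/

namespace MildStmt

/-- `R·I_A`: the `F_p`-span of all products `r·y` with `r ∈ R`, `y ∈ I_A`. -/
noncomputable def RIA (p d : ℕ) (R : Submodule (ZMod p) (A p d)) : Submodule (ZMod p) (A p d) :=
  Submodule.span (ZMod p) {x | ∃ r ∈ R, ∃ y ∈ IA p d, x = r * y}

/-!
The left `A`-module `I_A` is free on `X_1,…,X_d`: writing `∂_i x` (`rightDeriv i x`) for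
the part of `x` whose monomials end in `X_i`, with that last letter removed, every `x` with
zero constant term is `∑ᵢ (∂_i x) X_i`, and `∂_i (∑ⱼ a_j X_j) = a_i`. Since `R` is a right
ideal, `∂_i (r y) = r ∂_i y` for `y ∈ I_A` shows that `∂_i` maps `R·I_A` into `R`, which gives
injectivity.
-/

section FreeMonoidAlgebra

open MonoidAlgebra

variable {k α : Type*} [Semiring k]

theorem FreeMonoid.eq_one_or_exists_eq_mul_of (w : FreeMonoid α) :
    w = 1 ∨ ∃ v a, w = v * FreeMonoid.of a := by
  rcases List.eq_nil_or_concat w.toList with h | ⟨l, a, h⟩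
  · exact .inl (FreeMonoid.toList.injective h)
  · exact .inr ⟨FreeMonoid.ofList l, a, FreeMonoid.toList.injective (by simpa using h)⟩

noncomputable def rightDeriv (a : α) :
    MonoidAlgebra k (FreeMonoid α) →ₗ[k] MonoidAlgebra k (FreeMonoid α) :=
  (coeffLinearEquiv k).symm.toLinearMap ∘ₗ
    Finsupp.lcomapDomain (· * FreeMonoid.of a) (mul_left_injective _) ∘ₗ
    (coeffLinearEquiv k).toLinearMap

theorem coeff_rightDeriv (a : α) (f : MonoidAlgebra k (FreeMonoid α)) (w : FreeMonoid α) :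
    (rightDeriv a f).coeff w = f.coeff (w * FreeMonoid.of a) :=
  rfl

theorem coeff_mul_of_of_ne (f : MonoidAlgebra k (FreeMonoid α)) {a b : α} (hab : b ≠ a)
    (w : FreeMonoid α) :
    (f * of k _ (FreeMonoid.of b)).coeff (w * FreeMonoid.of a) = 0 := by
  refine coeff_mul_single_of_forall_mul_ne _ _ fun v h => hab ?_
  simpa using congrArg (fun u : FreeMonoid α => u.toList.getLast?) h

theorem coeff_one_mul (f g : MonoidAlgebra k (FreeMonoid α)) :
    (f * g).coeff 1 = f.coeff 1 * g.coeff 1 := by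
  rw [coeff_mul_antidiag f g 1 {(1, 1)} fun {q} => by simp [Prod.ext_iff],
    Finset.sum_singleton]

theorem rightDeriv_mul_of_self (a : α) (g : MonoidAlgebra k (FreeMonoid α)) :
    rightDeriv a (g * of k _ (FreeMonoid.of a)) = g := by
  ext w
  simp [coeff_rightDeriv]

theorem rightDeriv_mul_of_of_ne {a b : α} (hab : b ≠ a) (g : MonoidAlgebra k (FreeMonoid α)) :
    rightDeriv a (g * of k _ (FreeMonoid.of b)) = 0 := by
  ext w
  rw [coeff_rightDeriv, coeff_mul_of_of_ne g hab, coeff_zero, Finsupp.zero_apply]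

theorem rightDeriv_sum_mul_of [Fintype α]
    (g : α → MonoidAlgebra k (FreeMonoid α)) (a : α) :
    rightDeriv a (∑ b, g b * of k _ (FreeMonoid.of b)) = g a := by
  rw [map_sum, Finset.sum_eq_single a (fun b _ hb => rightDeriv_mul_of_of_ne hb (g b))
    (fun h => absurd (Finset.mem_univ a) h), rightDeriv_mul_of_self]

theorem eq_single_one_add_sum_rightDeriv_mul_of [Fintype α]
    (f : MonoidAlgebra k (FreeMonoid α)) :
    f = single 1 (f.coeff 1) + ∑ a, rightDeriv a f * of k _ (FreeMonoid.of a) := by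
  classical
  ext w
  rw [coeff_add, coeff_sum, Finsupp.add_apply, Finsupp.finsetSum_apply]
  obtain rfl | ⟨v, a, rfl⟩ := FreeMonoid.eq_one_or_exists_eq_mul_of w
  · simp
  · have hva : 1 ≠ v * FreeMonoid.of a := (mul_ne_one'.mpr (.inr (FreeMonoid.of_ne_one a))).symm
    rw [coeff_single, Finsupp.single_apply, if_neg hva, zero_add,
      Finset.sum_eq_single a (fun b _ hb => coeff_mul_of_of_ne _ hb v)
        (fun h => absurd (Finset.mem_univ a) h)]
    simp [coeff_rightDeriv]

theorem sum_rightDeriv_mul_of [Fintype α] {f : MonoidAlgebra k (FreeMonoid α)}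
    (hf : f.coeff 1 = 0) : ∑ a, rightDeriv a f * of k _ (FreeMonoid.of a) = f := by
  conv_rhs => rw [eq_single_one_add_sum_rightDeriv_mul_of f, hf, single_zero, zero_add]

theorem rightDeriv_mul_of_coeff_one_eq_zero [Fintype α] (a : α)
    (r : MonoidAlgebra k (FreeMonoid α)) {y : MonoidAlgebra k (FreeMonoid α)}
    (hy : y.coeff 1 = 0) : rightDeriv a (r * y) = r * rightDeriv a y := by
  conv_lhs => rw [← sum_rightDeriv_mul_of hy, Finset.mul_sum]
  simp only [← mul_assoc]
  exact rightDeriv_sum_mul_of (fun b => r * rightDeriv b y) a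

end FreeMonoidAlgebra

section FreeAlgebraIdeals

variable {p d : ℕ}

theorem X_mem_IA (i : Fin d) : X p d i ∈ IA p d :=
  Submodule.subset_span ⟨1, X p d i, 1, ⟨i, rfl⟩, by simp⟩

theorem mul_mem_tsi {S : Set (A p d)} {x : A p d} (hx : x ∈ tsi p d S) (c : A p d) :
    x * c ∈ tsi p d S := by
  induction hx using Submodule.span_induction with
  | mem y hy =>
    obtain ⟨a, s, b, hs, rfl⟩ := hy
    exact Submodule.subset_span ⟨a, s, b * c, hs, by rw [mul_assoc]⟩
  | zero => simp
  | add y z _ _ hy hz => rw [add_mul]; exact add_mem hy hz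
  | smul r y _ hy => rw [smul_mul_assoc]; exact Submodule.smul_mem _ r hy

theorem coeff_one_eq_zero_of_mem_IA {x : A p d} (hx : x ∈ IA p d) : x.coeff 1 = 0 := by
  induction hx using Submodule.span_induction with
  | mem y hy =>
    obtain ⟨a, _, b, ⟨i, rfl⟩, rfl⟩ := hy
    simp [coeff_one_mul, X]
  | zero => simp
  | add y z _ _ hy hz => simp [hy, hz]
  | smul r y _ hy => simp [hy]

theorem rightDeriv_mem_of_mem_RIA {R : Submodule (ZMod p) (A p d)}
    (hR : ∀ r ∈ R, ∀ c, r * c ∈ R) {x : A p d} (hx : x ∈ RIA p d R) (i : Fin d) :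
    rightDeriv i x ∈ R := by
  induction hx using Submodule.span_induction with
  | mem z hz =>
    obtain ⟨r, hr, y, hy, rfl⟩ := hz
    rw [rightDeriv_mul_of_coeff_one_eq_zero i r (coeff_one_eq_zero_of_mem_IA hy)]
    exact hR r hr _
  | zero => simp
  | add y z _ _ hy hz => rw [map_add]; exact add_mem hy hz
  | smul c y _ hy => rw [map_smul]; exact R.smul_mem c hy

end FreeAlgebraIdeals

theorem stmt_9_general (p d m : ℕ) (ρ : Fin m → A p d) :
    (∀ (i : Fin d), ∀ a ∈ tsi p d (Set.range ρ),
        a * X p d i ∈ RIA p d (tsi p d (Set.range ρ))) ∧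
    (∀ a : Fin d → A p d,
        (∑ i, a i * X p d i) ∈ RIA p d (tsi p d (Set.range ρ)) →
          ∀ i, a i ∈ tsi p d (Set.range ρ)) ∧
    (∀ x ∈ IA p d, ∃ a : Fin d → A p d,
        x - ∑ i, a i * X p d i ∈ RIA p d (tsi p d (Set.range ρ))) := by
  refine ⟨fun i a ha => Submodule.subset_span ⟨a, ha, X p d i, X_mem_IA i, rfl⟩,
    fun a ha i => ?_, fun x hx => ⟨fun i => rightDeriv i x, ?_⟩⟩
  · have h := rightDeriv_mem_of_mem_RIA (fun r hr c => mul_mem_tsi hr c) ha i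
    unfold X at h
    rwa [rightDeriv_sum_mul_of] at h
  · unfold X
    rw [sum_rightDeriv_mul_of (coeff_one_eq_zero_of_mem_IA hx), sub_self]
    exact zero_mem _

/-- for homogeneous `ρ_1,…,ρ_m ∈ I_A` of positive degrees, with
`R = (ρ_1,…,ρ_m)`, the map `(A/R)^d → I_A/(R·I_A)`, `(a_i mod R) ↦ (Σ_i a_i X_i) mod R·I_A`,
is well defined and bijective: the left `(A/R)`-module `I_A/(R·I_A)` is free on the images
of `X_1,…,X_d`. -/
theorem stmt_9 (p d m : ℕ) [Fact p.Prime] (hd : 1 ≤ d)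
    (τ : Fin d → ℕ) (hτ : ∀ i, 1 ≤ τ i)
    (σ : Fin m → ℕ) (hσ : ∀ j, 1 ≤ σ j)
    (ρ : Fin m → A p d)
    (hρIA : ∀ j, ρ j ∈ IA p d)
    (hρhom : ∀ j, ρ j ∈ Asub p d τ (σ j)) :
    (∀ (i : Fin d), ∀ a ∈ tsi p d (Set.range ρ),
        a * X p d i ∈ RIA p d (tsi p d (Set.range ρ))) ∧
    (∀ a : Fin d → A p d,
        (∑ i, a i * X p d i) ∈ RIA p d (tsi p d (Set.range ρ)) →
          ∀ i, a i ∈ tsi p d (Set.range ρ)) ∧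
    (∀ x ∈ IA p d, ∃ a : Fin d → A p d,
        x - ∑ i, a i * X p d i ∈ RIA p d (tsi p d (Set.range ρ))) :=
  stmt_9_general p d m ρ

end MildStmt
end

section
/- Let d ≥ 2, let 1 ≤ c < d, n ≥ 2 and 1 ≤ e ≤ n−1, and let w_1,…,w_m be pairwise distinct words of length n in the free monoid on the letters X_1,…,X_d such that for each j the first e letters of w_j belong to {X_1,…,X_c} and the last n−e letters of w_j belong to {X_{c+1},…,X_d}. Then the sequence of words w_1,…,w_m is combinatorially free. -/
/-!
A nonempty word `x` that is both a prefix of length `k` of some `w_i` and a suffix of some `w_j`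
would contain `min k e` letters from `{X_1,…,X_c}` (read inside `w_i`) and `e - (n - k)` such
letters (read inside `w_j`); these counts differ whenever `0 < k < n` and `0 < e < n`. Factors are
excluded since all the words have the same length.
-/

namespace MildStmt

section Words

variable {α : Type*}

theorem FreeMonoid.eq_of_eq_mul_mul_of_length_eq {a b u v : FreeMonoid α} (h : b = u * a * v)
    (hl : b.length = a.length) : b = a := by
  have hlen := congrArg FreeMonoid.length h
  simp only [FreeMonoid.length_mul] at hlen
  have hu : u = 1 := FreeMonoid.length_eq_zero.mp (by omega)
  have hv : v = 1 := FreeMonoid.length_eq_zero.mp (by omega)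
  simpa [hu, hv] using h

variable {p : α → Bool} {l : List α} {e : ℕ}

theorem List.countP_take_of_forall_take_of_forall_drop (he : e ≤ l.length)
    (htake : ∀ a ∈ l.take e, p a) (hdrop : ∀ a ∈ l.drop e, ¬ p a) (k : ℕ) :
    (l.take k).countP p = min k e := by
  rw [← List.take_append_drop e l, List.take_append, List.countP_append,
    List.countP_eq_length.mpr fun a ha => htake a (List.mem_of_mem_take ha),
    List.countP_eq_zero.mpr fun a ha => hdrop a (List.mem_of_mem_take ha)]
  simp [Nat.min_eq_left he]

theorem List.countP_drop_of_forall_take_of_forall_drop (he : e ≤ l.length)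
    (htake : ∀ a ∈ l.take e, p a) (hdrop : ∀ a ∈ l.drop e, ¬ p a) (k : ℕ) :
    (l.drop k).countP p = e - k := by
  have hsplit := List.countP_append (p := p) (l₁ := l.take k) (l₂ := l.drop k)
  rw [List.take_append_drop, List.countP_take_of_forall_take_of_forall_drop he htake hdrop] at hsplit
  have hall : l.countP p = e := by
    simpa [Nat.min_eq_right he] using
      List.countP_take_of_forall_take_of_forall_drop he htake hdrop l.length
  omega

theorem List.take_ne_drop_of_forall_take_of_forall_drop {l' : List α} {n k : ℕ}
    (hl : l.length = n) (hl' : l'.length = n) (he0 : 0 < e) (he : e < n)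
    (hk0 : 0 < k) (hk : k < n)
    (htake : ∀ a ∈ l.take e, p a) (hdrop : ∀ a ∈ l.drop e, ¬ p a)
    (htake' : ∀ a ∈ l'.take e, p a) (hdrop' : ∀ a ∈ l'.drop e, ¬ p a) :
    l.take k ≠ l'.drop (n - k) := by
  intro h
  have hcount := congrArg (List.countP p) h
  rw [List.countP_take_of_forall_take_of_forall_drop (by omega) htake hdrop,
    List.countP_drop_of_forall_take_of_forall_drop (by omega) htake' hdrop'] at hcount
  omega

end Words

theorem stmt_11_general (d c n e m : ℕ)
    (he1 : 1 ≤ e) (hen : e ≤ n - 1)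
    (w : Fin m → FreeMonoid (Fin d))
    (hdist : Function.Injective w)
    (hlen : ∀ j, (w j).toList.length = n)
    (hfirst : ∀ j, ∀ x ∈ (w j).toList.take e, (x : Fin d).val < c)
    (hlast : ∀ j, ∀ x ∈ (w j).toList.drop e, c ≤ (x : Fin d).val) :
    CombFree w := by
  refine ⟨fun i j hij u v h => hij (hdist ?_).symm, ?_⟩
  · exact FreeMonoid.eq_of_eq_mul_mul_of_length_eq h ((hlen j).trans (hlen i).symm)
  intro i j x y x' y' hx hy _ _ hi hj hxy
  subst hxy
  have hi' : (w i).toList = x.toList ++ y.toList := by rw [hi, FreeMonoid.toList_mul]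
  have hj' : (w j).toList = x'.toList ++ x.toList := by rw [hj, FreeMonoid.toList_mul]
  have hx0 : 0 < x.length := Nat.pos_of_ne_zero (mt FreeMonoid.length_eq_zero.mp hx)
  have hy0 : 0 < y.length := Nat.pos_of_ne_zero (mt FreeMonoid.length_eq_zero.mp hy)
  have hni : x.length + y.length = n := by rw [← FreeMonoid.length_mul, ← hi]; exact hlen i
  have hnj : x'.length + x.length = n := by rw [← FreeMonoid.length_mul, ← hj]; exact hlen j
  refine List.take_ne_drop_of_forall_take_of_forall_drop (p := fun a => decide (a.val < c))
    (e := e) (k := x.length) (hlen i) (hlen j) (by omega) (by omega) hx0 (by omega)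
    (by simpa using hfirst i) (by simpa using hlast i)
    (by simpa using hfirst j) (by simpa using hlast j) ?_
  rw [hi', List.take_left' (i := x.length) rfl, hj', List.drop_left' (i := n - x.length) (by
    change x'.length = n - x.length; omega)]

/-- pairwise distinct words of length `n` whose first `e` letters lie in
`{X_1,…,X_c}` and whose last `n−e` letters lie in `{X_{c+1},…,X_d}` form a
combinatorially free sequence. -/
theorem stmt_11 (d c n e m : ℕ) (hd : 2 ≤ d) (hc1 : 1 ≤ c) (hcd : c < d)
    (hn : 2 ≤ n) (he1 : 1 ≤ e) (hen : e ≤ n - 1)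
    (w : Fin m → FreeMonoid (Fin d))
    (hdist : Function.Injective w)
    (hlen : ∀ j, (w j).toList.length = n)
    (hfirst : ∀ j, ∀ x ∈ (w j).toList.take e, (x : Fin d).val < c)
    (hlast : ∀ j, ∀ x ∈ (w j).toList.drop e, c ≤ (x : Fin d).val) :
    CombFree w :=
  stmt_11_general d c n e m he1 hen w hdist hlen hfirst hlast

end MildStmt
end
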